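/- Let m, k be integers with m ≥ 5 and 1 ≤ k ≤ ⌊(m-1)/2⌋. Then 3^{m-1} - 2^k·C(m-1, k) - Σ_{j=0}^{k} 2^j·C(m, j) > 0. -/

import Mathlib

/-!
Put `n = m - 1` and `t j = 2 ^ j * C(n, j)`, so that `3 ^ n = ∑_{j ≤ n} t j` and, by Pascal's
rule, `∑_{j ≤ k} 2 ^ j * C(n + 1, j) = ∑_{j ≤ k} t j + 2 ∑_{j < k} t j`. The claim becomes
`t k + 2 ∑_{j < k} t j < ∑_{k < j ≤ n} t j`, and the upper half of the row dominates the lower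
half because `t (n - i) = 2 ^ (n - 2 i) * t i`. Only when `n = 2k` is the term `t k` not absorbed
this way; there the ratios `t (j + 1) / t j = 2 (n - j) / (j + 1)` show
`t k < 2 t (k - 1) + 14 t (k - 2)`.
-/

open Finset

lemma three_pow_eq_sum_two_pow_mul_choose (n : ℕ) :
    3 ^ n = ∑ j ∈ range (n + 1), 2 ^ j * n.choose j := by
  rw [show 3 = 2 + 1 by rfl, add_pow]
  simp

lemma sum_two_pow_mul_choose_succ (n K : ℕ) :
    ∑ j ∈ range (K + 1), 2 ^ j * (n + 1).choose j =
      ∑ j ∈ range (K + 1), 2 ^ j * n.choose j +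
        2 * ∑ j ∈ range K, 2 ^ j * n.choose j := by
  induction K with
  | zero => simp
  | succ K ih =>
    rw [sum_range_succ, ih, Nat.choose_succ_succ', sum_range_succ _ (K + 1), sum_range_succ _ K]
    ring

lemma sum_range_succ_eq_add_sum_reflect {M : Type*} [AddCommMonoid M] (f : ℕ → M) {k n : ℕ}
    (hk : k ≤ n) :
    ∑ j ∈ range (n + 1), f j =
      ∑ j ∈ range (k + 1), f j + ∑ i ∈ range (n - k), f (n - i) := by
  rw [show n + 1 = (k + 1) + (n - k) by omega, sum_range_add,
    ← sum_range_reflect (fun i => f (n - i))]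
  congr 1
  refine sum_congr rfl fun i hi => ?_
  rw [mem_range] at hi
  congr 1
  omega

lemma two_pow_mul_choose_sub {n i : ℕ} (h : i + i ≤ n) :
    2 ^ (n - i) * n.choose (n - i) = 2 ^ (n - 2 * i) * (2 ^ i * n.choose i) := by
  rw [Nat.choose_symm (by omega), ← mul_assoc, ← pow_add]
  congr 2
  omega

lemma two_mul_two_pow_mul_choose_le {n i : ℕ} (h : i + i < n) :
    2 * (2 ^ i * n.choose i) ≤ 2 ^ (n - i) * n.choose (n - i) := by
  rw [two_pow_mul_choose_sub h.le]
  exact Nat.mul_le_mul_right _ (Nat.one_lt_two_pow (by omega))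

lemma two_mul_sum_le_sum_reflect {n k : ℕ} (h : 2 * k ≤ n + 1) :
    2 * ∑ j ∈ range k, 2 ^ j * n.choose j ≤
      ∑ i ∈ range k, 2 ^ (n - i) * n.choose (n - i) := by
  rw [mul_sum]
  exact sum_le_sum fun i hi => two_mul_two_pow_mul_choose_le (by rw [mem_range] at hi; omega)

lemma two_mul_choose_middle_lt (k : ℕ) :
    2 * (2 * k + 4).choose (k + 2) <
      7 * (2 * k + 4).choose k + 2 * (2 * k + 4).choose (k + 1) := by
  have hpos : 0 < (2 * k + 4).choose k := Nat.choose_pos (by omega)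
  have h₁ := Nat.choose_succ_right_eq (2 * k + 4) k
  have h₂ := Nat.choose_succ_right_eq (2 * k + 4) (k + 1)
  rw [show 2 * k + 4 - k = k + 4 by omega] at h₁
  rw [show 2 * k + 4 - (k + 1) = k + 3 by omega] at h₂
  nlinarith

lemma lower_half_lt_upper_half_of_lt {n k : ℕ} (h : 2 * k < n) :
    2 ^ k * n.choose k + 2 * ∑ j ∈ range k, 2 ^ j * n.choose j <
      ∑ i ∈ range (n - k), 2 ^ (n - i) * n.choose (n - i) := by
  have hsub : ∑ i ∈ range (k + 1), 2 ^ (n - i) * n.choose (n - i) ≤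
      ∑ i ∈ range (n - k), 2 ^ (n - i) * n.choose (n - i) :=
    sum_le_sum_of_subset (range_subset_range.mpr (by omega))
  have hpos : 0 < 2 ^ k * n.choose k := by positivity [Nat.choose_pos (by omega : k ≤ n)]
  have hk := two_mul_two_pow_mul_choose_le (n := n) (i := k) (by omega)
  have hsum := two_mul_sum_le_sum_reflect (n := n) (k := k) (by omega)
  rw [sum_range_succ] at hsub
  omega

lemma lower_half_lt_upper_half_middle (k : ℕ) :
    2 ^ (k + 2) * (2 * k + 4).choose (k + 2) +
        2 * ∑ j ∈ range (k + 2), 2 ^ j * (2 * k + 4).choose j <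
      ∑ i ∈ range (k + 2), 2 ^ (2 * k + 4 - i) * (2 * k + 4).choose (2 * k + 4 - i) := by
  have hsum := two_mul_sum_le_sum_reflect (n := 2 * k + 4) (k := k) (by omega)
  have h₀ := two_pow_mul_choose_sub (n := 2 * k + 4) (i := k) (by omega)
  have h₁ := two_pow_mul_choose_sub (n := 2 * k + 4) (i := k + 1) (by omega)
  rw [show 2 * k + 4 - 2 * k = 4 by omega] at h₀
  rw [show 2 * k + 4 - 2 * (k + 1) = 2 by omega] at h₁
  have hmid := two_mul_choose_middle_lt k
  simp only [sum_range_succ, h₀, h₁, pow_succ] at hsum ⊢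
  nlinarith [pow_pos (two_pos : (0 : ℕ) < 2) k]

lemma lower_half_lt_upper_half {n k : ℕ} (hk : 2 * k ≤ n) (hn : 3 ≤ n) :
    2 ^ k * n.choose k + 2 * ∑ j ∈ range k, 2 ^ j * n.choose j <
      ∑ i ∈ range (n - k), 2 ^ (n - i) * n.choose (n - i) := by
  rcases hk.lt_or_eq with hlt | rfl
  · exact lower_half_lt_upper_half_of_lt hlt
  · obtain ⟨k, rfl⟩ : ∃ l, k = l + 2 := ⟨k - 2, by omega⟩
    rw [show 2 * (k + 2) - (k + 2) = k + 2 by omega, show 2 * (k + 2) = 2 * k + 4 by ring]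
    exact lower_half_lt_upper_half_middle k

lemma two_pow_mul_choose_add_sum_lt_three_pow {n k : ℕ} (hk : 2 * k ≤ n) (hn : 3 ≤ n) :
    2 ^ k * n.choose k + ∑ j ∈ range (k + 1), 2 ^ j * (n + 1).choose j < 3 ^ n := by
  rw [sum_two_pow_mul_choose_succ, three_pow_eq_sum_two_pow_mul_choose,
    sum_range_succ_eq_add_sum_reflect _ (by omega : k ≤ n)]
  have := lower_half_lt_upper_half hk hn
  omega

theorem stmt_1 (m k : ℕ) (hm : 5 ≤ m) (hk : k ≤ (m - 1) / 2) :
    0 < (3 : ℤ) ^ (m - 1) - 2 ^ k * ((m - 1).choose k : ℤ)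
        - ∑ j ∈ Finset.range (k + 1), 2 ^ j * (m.choose j : ℤ) := by
  obtain ⟨n, rfl⟩ : ∃ n, m = n + 1 := ⟨m - 1, by omega⟩
  have key := two_pow_mul_choose_add_sum_lt_three_pow (n := n) (k := k) (by omega) (by omega)
  rw [Nat.add_sub_cancel]
  zify at key
  linarith
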